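/- Let v be a positive integer, p a prime, and k ≥ 1 with p^k ∣ v. Set j = (padic valuation of v at p) − k + 1, D₁-index u₁ = v / p^j and D₂-index u₂ = p^k. Let f be a function from the positive integers to ℕ satisfying: f(a) ≤ f(b) whenever b ∣ a. Suppose f(u₁) > f(u₂). Then for every divisor u of v: p^k ∣ u if and only if f(u) < f(u₁). -/
import Mathlib


theorem conductor_divisibility_test (v : ℕ) (hv : 0 < v) (p : ℕ) (hp : p.Prime)
    (k : ℕ) (hk : 1 ≤ k) (hpk : p ^ k ∣ v)
    (f : ℕ → ℕ) (hf : ∀ a b : ℕ, b ∣ a → f a ≤ f b)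
    (hsep : f (p ^ k) < f (v / p ^ (v.factorization p - k + 1))) :
    ∀ u : ℕ, u ∣ v →
      (p ^ k ∣ u ↔ f u < f (v / p ^ (v.factorization p - k + 1))) := by
  intro u hu
  have hu0 : u ≠ 0 := by
    rintro rfl
    exact hv.ne' (Nat.eq_zero_of_zero_dvd hu)
  set ν := v.factorization p with hνdef
  have hν : k ≤ ν := (Nat.Prime.pow_dvd_iff_le_factorization hp hv.ne').mp hpk
  set j := ν - k + 1 with hjdef
  have hj : j ≤ ν := by omega
  have hpj : p ^ j ∣ v := (Nat.Prime.pow_dvd_iff_le_factorization hp hv.ne').mpr hj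
  constructor
  · intro h
    exact lt_of_le_of_lt (hf u _ h) hsep
  · intro h
    by_contra hnd
    have hνu : u.factorization p ≤ k - 1 := by
      have := (Nat.Prime.pow_dvd_iff_le_factorization hp hu0).not.mp hnd
      omega
    have key : ∀ q, (p ^ j * u).factorization q ≤ v.factorization q := by
      intro q
      rw [Nat.factorization_mul (pow_ne_zero _ hp.pos.ne') hu0]
      rw [Nat.Prime.factorization_pow hp]
      by_cases hq : q = p
      · subst hq
        simp only [Finsupp.coe_add, Pi.add_apply, Finsupp.single_eq_same]
        omega
      · simp only [Finsupp.coe_add, Pi.add_apply, Finsupp.single_apply,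
          if_neg (Ne.symm hq), zero_add]
        exact (Nat.factorization_le_iff_dvd hu0 hv.ne').mpr hu q
    have hdvd : u ∣ v / p ^ j := by
      rw [Nat.dvd_div_iff_mul_dvd hpj]
      refine (Nat.factorization_le_iff_dvd (mul_ne_zero (pow_ne_zero _ hp.pos.ne') hu0) hv.ne').mp ?_
      intro q; exact key q
    exact absurd (hf _ u hdvd) (not_le.mpr h)
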